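/- arXiv:0705.3273 — 2 statements merged into one kernel-verified Lean document; each statement's English description precedes it below -/
import Mathlib

section
/- Let t be an irrational number in (0,1), let Q, k be positive integers, and let δ > 0 be the distance from t to the finite set M of all fractions with denominator in {Q, 2Q, …, kQ} lying in [0,1]. Set n_i = 1 + (N+i)Q and n_j = 1 + (N+j)Q with 0 ≤ i < j ≤ k. If |t − m₁/n_i| < δ/2 and m₁, m₂ are integers, then |m₁·n_j − m₂·n_i| > δ·Q²·N/2. -/
/-! Put `d = j - i`, so `nⱼ = nᵢ + dQ` and `m₁nⱼ - m₂nᵢ = nᵢ · dQ · (m₁/nᵢ - r)` with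
`r = (m₂ - m₁)/(dQ)`. As `1 ≤ d ≤ k`, `r` is a point of `M` or lies outside `[0, 1]`; since `0, 1 ∈ M`,
either way `|t - r| ≥ δ`, hence `|m₁/nᵢ - r| > δ/2`, and `nᵢ · dQ > NQ²`. -/

open Metric Set

/-- The paper's `M` is `denomFractions Q k ∩ [0, 1]`. -/
def denomFractions (Q k : ℕ) : Set ℝ :=
  {x : ℝ | ∃ j ∈ Finset.Icc 1 k, ∃ a : ℤ, x = (a : ℝ) / ((j * Q : ℕ) : ℝ)}

lemma intCast_div_mem_denomFractions {Q k d : ℕ} (hd : 1 ≤ d) (hdk : d ≤ k) (a : ℤ) :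
    (a : ℝ) / ((d * Q : ℕ) : ℝ) ∈ denomFractions Q k :=
  ⟨d, Finset.mem_Icc.mpr ⟨hd, hdk⟩, a, rfl⟩

lemma zero_mem_denomFractions {Q k : ℕ} (hk : 1 ≤ k) : (0 : ℝ) ∈ denomFractions Q k := by
  simpa using intCast_div_mem_denomFractions (Q := Q) le_rfl hk 0

lemma one_mem_denomFractions {Q k : ℕ} (hQ : 0 < Q) (hk : 1 ≤ k) :
    (1 : ℝ) ∈ denomFractions Q k := by
  have hQ' : (Q : ℝ) ≠ 0 := by positivity
  simpa [hQ'] using intCast_div_mem_denomFractions (Q := Q) le_rfl hk Q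

lemma infDist_inter_Icc_le_abs_sub {S : Set ℝ} {t r : ℝ} (ht : t ∈ Icc 0 1)
    (h0 : 0 ∈ S) (h1 : 1 ∈ S) (hr : r ∈ S) : infDist t (S ∩ Icc 0 1) ≤ |t - r| := by
  by_cases hr01 : r ∈ Icc 0 1
  · exact infDist_le_dist_of_mem ⟨hr, hr01⟩
  rcases not_and_or.mp hr01 with hr0 | hr1
  · calc infDist t (S ∩ Icc 0 1) ≤ dist t 0 := infDist_le_dist_of_mem ⟨h0, by simp⟩
      _ ≤ |t - r| := by rw [Real.dist_eq, sub_zero]; exact abs_le_abs (by linarith) (by linarith [ht.1])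
  · calc infDist t (S ∩ Icc 0 1) ≤ dist t 1 := infDist_le_dist_of_mem ⟨h1, by simp⟩
      _ ≤ |t - r| := by
        rw [Real.dist_eq, abs_sub_comm, abs_sub_comm t]
        exact abs_le_abs (by linarith) (by linarith [ht.2])

lemma abs_mul_add_sub_mul_eq {n D : ℝ} (hn : 0 < n) (hD : 0 < D) (a b : ℝ) :
    |a * (n + D) - b * n| = n * D * |a / n - (b - a) / D| := by
  have h : a * (n + D) - b * n = n * D * (a / n - (b - a) / D) := by
    field_simp
    ring
  rw [h, abs_mul, abs_of_pos (mul_pos hn hD)]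

theorem stmt_5_general (t : ℝ) (ht : t ∈ Set.Ioo (0 : ℝ) 1)
    (Q k : ℕ) (hQ : 0 < Q) (δ : ℝ)
    (hδ : δ = Metric.infDist t
      ({x : ℝ | ∃ j ∈ Finset.Icc 1 k, ∃ a : ℤ, x = (a : ℝ) / ((j * Q : ℕ) : ℝ)}
        ∩ Set.Icc 0 1))
    (N : ℕ) (i j : ℕ) (hij : i < j) (hjk : j ≤ k)
    (m₁ m₂ : ℤ)
    (happrox : |t - (m₁ : ℝ) / ((1 + (N + i) * Q : ℕ) : ℝ)| < δ / 2) :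
    |(m₁ : ℝ) * ((1 + (N + j) * Q : ℕ) : ℝ) - (m₂ : ℝ) * ((1 + (N + i) * Q : ℕ) : ℝ)|
        > δ * (Q : ℝ) ^ 2 * (N : ℝ) / 2 := by
  obtain ⟨d, rfl⟩ : ∃ d, j = i + d := ⟨j - i, by omega⟩
  set nᵢ : ℝ := ((1 + (N + i) * Q : ℕ) : ℝ)
  set r : ℝ := ((m₂ - m₁ : ℤ) : ℝ) / ((d * Q : ℕ) : ℝ)
  have hδr : δ ≤ |t - r| := hδ ▸ infDist_inter_Icc_le_abs_sub (Ioo_subset_Icc_self ht)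
    (zero_mem_denomFractions (by omega)) (one_mem_denomFractions hQ (by omega))
    (intCast_div_mem_denomFractions (by omega) (by omega) _)
  have hδpos : 0 < δ := by linarith [abs_nonneg (t - (m₁ : ℝ) / nᵢ)]
  have hfar : δ / 2 < |(m₁ : ℝ) / nᵢ - r| := by
    linarith [abs_sub_le t ((m₁ : ℝ) / nᵢ) r]
  have hnⱼ : ((1 + (N + (i + d)) * Q : ℕ) : ℝ) = nᵢ + ((d * Q : ℕ) : ℝ) := by
    simp only [nᵢ]; push_cast; ring
  have hsize : (N : ℝ) * Q ^ 2 < nᵢ * ((d * Q : ℕ) : ℝ) := by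
    have : N * Q ^ 2 < (1 + (N + i) * Q) * (d * Q) := by
      calc N * Q ^ 2 < (1 + (N + i) * Q) * Q := by nlinarith
        _ ≤ (1 + (N + i) * Q) * (d * Q) := Nat.mul_le_mul_left _ (Nat.le_mul_of_pos_left Q (by omega))
    simp only [nᵢ]
    exact_mod_cast this
  have hnᵢ : 0 < nᵢ := Nat.cast_pos.mpr (by positivity)
  have hdQ : (0 : ℝ) < ((d * Q : ℕ) : ℝ) := Nat.cast_pos.mpr (Nat.mul_pos (by omega) hQ)
  rw [hnⱼ, abs_mul_add_sub_mul_eq hnᵢ hdQ, ← Int.cast_sub]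
  calc δ * (Q : ℝ) ^ 2 * (N : ℝ) / 2 = (N * Q ^ 2) * (δ / 2) := by ring
    _ < nᵢ * ((d * Q : ℕ) : ℝ) * (δ / 2) := by gcongr
    _ < nᵢ * ((d * Q : ℕ) : ℝ) * |(m₁ : ℝ) / nᵢ - r| := by gcongr

/-- Let t ∈ (0,1) be irrational, δ > 0 the distance from t to the set of fractions
with denominator in {Q,…,kQ} lying in [0,1]. If |t − m₁/nᵢ| < δ/2 then
|m₁nⱼ − m₂nᵢ| > δQ²N/2, where nᵢ = 1+(N+i)Q, nⱼ = 1+(N+j)Q, i < j ≤ k. -/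
theorem stmt_5 (t : ℝ) (ht : t ∈ Set.Ioo (0 : ℝ) 1) (hirr : Irrational t)
    (Q k : ℕ) (hQ : 0 < Q) (hk : 0 < k) (δ : ℝ)
    (hδ : δ = Metric.infDist t
      ({x : ℝ | ∃ j ∈ Finset.Icc 1 k, ∃ a : ℤ, x = (a : ℝ) / ((j * Q : ℕ) : ℝ)}
        ∩ Set.Icc 0 1))
    (hδpos : 0 < δ)
    (N : ℕ) (hN : 0 < N) (i j : ℕ) (hij : i < j) (hjk : j ≤ k)
    (m₁ m₂ : ℤ)
    (happrox : |t - (m₁ : ℝ) / ((1 + (N + i) * Q : ℕ) : ℝ)| < δ / 2) :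
    |(m₁ : ℝ) * ((1 + (N + j) * Q : ℕ) : ℝ) - (m₂ : ℝ) * ((1 + (N + i) * Q : ℕ) : ℝ)|
        > δ * (Q : ℝ) ^ 2 * (N : ℝ) / 2 :=
  stmt_5_general t ht Q k hQ δ hδ N i j hij hjk m₁ m₂ happrox
end

section
/- (Pigeonhole blocking argument) Let S be a finite set of k real numbers in (0,1), and for each positive integer n let 𝒫_n = {x ∈ ℝ : ∃ m ∈ {1,…,n−1}, |x − m/n| < C/n²} for a fixed constant C > 0. Suppose every element of S is irrational and δ > 0 is the distance from S to the set of fractions with denominators Q, 2Q, …, kQ, for some positive integer Q. Then for all sufficiently large N, there exists i ∈ {0,…,k} such that S ∩ 𝒫_{n_i} = ∅, where n_i = 1 + (N+i)Q. -/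
/-!
If a point `t` of `S` were blocked at two indices `i < i'`, i.e. `|t - m / nᵢ| < C / nᵢ²` and
`|t - m' / nᵢ'| < C / nᵢ'²`, then subtracting `t nᵢ ≈ m` from `t nᵢ' ≈ m'` gives
`|t - (m' - m) / ((i' - i) Q)| < 2C / nᵢ`, since `nᵢ' - nᵢ = (i' - i) Q`. Once `nᵢ > 2C / δ` this
contradicts the choice of `δ`. So each of the `k` points is blocked at most once, and by the
pigeonhole principle one of the `k + 1` indices `0, …, k` blocks no point at all.
-/

open Finset

lemma exists_lt_of_forall_le_exists_mem {α : Type*} {S : Finset α} {k : ℕ} (hS : #S ≤ k)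
    {P : ℕ → α → Prop} (h : ∀ i ≤ k, ∃ t ∈ S, P i t) :
    ∃ i i', i < i' ∧ i' ≤ k ∧ ∃ t ∈ S, P i t ∧ P i' t := by
  have : Nonempty α := ⟨(h 0 k.zero_le).choose⟩
  choose! f hfS hfP using h
  have hlt : #S < #(range (k + 1)) := by rw [card_range]; omega
  obtain ⟨i, hi, i', hi', hne, heq⟩ := exists_ne_map_eq_of_card_lt_of_maps_to hlt
    fun i hi ↦ hfS i (Nat.lt_succ_iff.mp (mem_range.mp hi))
  rw [mem_range, Nat.lt_succ_iff] at hi hi'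
  rcases hne.lt_or_gt with h | h
  · exact ⟨i, i', h, hi', f i, hfS i hi, hfP i hi, heq ▸ hfP i' hi'⟩
  · exact ⟨i', i, h, hi, f i, hfS i hi, heq ▸ hfP i' hi', hfP i hi⟩

lemma abs_mul_sub_lt_of_abs_sub_div_lt {t m C n : ℝ} (hn : 0 < n) (h : |t - m / n| < C / n ^ 2) :
    |t * n - m| < C / n :=
  calc |t * n - m| = |t - m / n| * n := by
        rw [← abs_of_pos hn, ← abs_mul, abs_of_pos hn]; congr 1; field_simp
    _ < C / n ^ 2 * n := by gcongr
    _ = C / n := by field_simp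

lemma abs_sub_div_lt_of_abs_sub_div_lt {t C n d : ℝ} {m m' : ℤ} (hC : 0 ≤ C) (hn : 0 < n)
    (hd : 1 ≤ d) (h : |t - m / n| < C / n ^ 2) (h' : |t - m' / (n + d)| < C / (n + d) ^ 2) :
    |t - ((m' - m : ℤ) : ℝ) / d| < 2 * C / n := by
  have hd₀ : 0 < d := by linarith
  calc |t - ((m' - m : ℤ) : ℝ) / d| = |t * d - (m' - m : ℤ)| / d := by
        rw [← abs_of_pos hd₀, ← abs_div, abs_of_pos hd₀]; congr 1; field_simp
    _ ≤ |t * d - (m' - m : ℤ)| := div_le_self (abs_nonneg _) hd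
    _ = |(t * (n + d) - m') - (t * n - m)| := by push_cast; ring_nf
    _ ≤ |t * (n + d) - m'| + |t * n - m| := abs_sub _ _
    _ < C / (n + d) + C / n :=
        add_lt_add (abs_mul_sub_lt_of_abs_sub_div_lt (by linarith) h')
          (abs_mul_sub_lt_of_abs_sub_div_lt hn h)
    _ ≤ C / n + C / n := by gcongr; linarith
    _ = 2 * C / n := by ring

theorem stmt_6_general (S : Finset ℝ) (k : ℕ) (hcard : S.card = k)
    (C : ℝ) (hC : 0 < C) (Q : ℕ) (hQ : 0 < Q) (δ : ℝ) (hδpos : 0 < δ)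
    (hδ : ∀ t ∈ S, ∀ j ∈ Finset.Icc 1 k, ∀ a : ℤ, δ ≤ |t - (a : ℝ) / ((j * Q : ℕ) : ℝ)|) :
    ∃ N₀ : ℕ, ∀ N ≥ N₀, ∃ i ≤ k, ∀ t ∈ S,
      ¬ ∃ m : ℤ, 1 ≤ m ∧ m ≤ ((1 + (N + i) * Q : ℕ) : ℤ) - 1 ∧
          |t - (m : ℝ) / ((1 + (N + i) * Q : ℕ) : ℝ)| < C / ((1 + (N + i) * Q : ℕ) : ℝ) ^ 2 := by
  obtain ⟨N₀, hN₀⟩ := exists_nat_gt (2 * C / δ)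
  refine ⟨N₀, fun N hN ↦ ?_⟩
  by_contra! hblocked
  obtain ⟨i, i', hii', hi'k, t, ht, ⟨m, -, -, hm⟩, ⟨m', -, -, hm'⟩⟩ :=
    exists_lt_of_forall_le_exists_mem hcard.le hblocked
  obtain ⟨j, rfl⟩ := Nat.exists_eq_add_of_lt hii'
  have hnext : ((1 + (N + (i + j + 1)) * Q : ℕ) : ℝ)
      = ((1 + (N + i) * Q : ℕ) : ℝ) + (((j + 1) * Q : ℕ) : ℝ) := by push_cast; ring
  rw [hnext] at hm'
  have hN₀n : (N₀ : ℝ) ≤ ((1 + (N + i) * Q : ℕ) : ℝ) := by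
    exact_mod_cast hN.trans (by nlinarith)
  have hfar := hδ t ht (j + 1) (mem_Icc.mpr ⟨by omega, by omega⟩) (m' - m)
  have hnear := abs_sub_div_lt_of_abs_sub_div_lt hC.le (by positivity)
    (Nat.one_le_cast.mpr (Nat.mul_pos j.succ_pos hQ)) hm hm'
  have hsmall : 2 * C / ((1 + (N + i) * Q : ℕ) : ℝ) < δ := by
    rw [div_lt_iff₀ (by positivity)]
    rw [div_lt_iff₀ hδpos] at hN₀
    nlinarith
  linarith

/-- Pigeonhole blocking argument: if S ⊂ (0,1) is a finite set of k irrational numbers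
at distance δ > 0 from all fractions with denominators Q, 2Q, …, kQ, then for all
sufficiently large N there is i ∈ {0,…,k} with S ∩ 𝒫_{nᵢ} = ∅, nᵢ = 1+(N+i)Q, where
𝒫_n = {x : ∃ m ∈ {1,…,n−1}, |x − m/n| < C/n²}. -/
theorem stmt_6 (S : Finset ℝ) (k : ℕ) (hcard : S.card = k)
    (hS : ∀ t ∈ S, t ∈ Set.Ioo (0 : ℝ) 1) (hirr : ∀ t ∈ S, Irrational t)
    (C : ℝ) (hC : 0 < C) (Q : ℕ) (hQ : 0 < Q) (δ : ℝ) (hδpos : 0 < δ)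
    (hδ : ∀ t ∈ S, ∀ j ∈ Finset.Icc 1 k, ∀ a : ℤ, δ ≤ |t - (a : ℝ) / ((j * Q : ℕ) : ℝ)|) :
    ∃ N₀ : ℕ, ∀ N ≥ N₀, ∃ i ≤ k, ∀ t ∈ S,
      ¬ ∃ m : ℤ, 1 ≤ m ∧ m ≤ ((1 + (N + i) * Q : ℕ) : ℤ) - 1 ∧
          |t - (m : ℝ) / ((1 + (N + i) * Q : ℕ) : ℝ)| < C / ((1 + (N + i) * Q : ℕ) : ℝ) ^ 2 :=
  stmt_6_general S k hcard C hC Q hQ δ hδpos hδ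
end
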